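/- arXiv:2303.17266 — 3 statements merged into one kernel-verified Lean document; each statement's English description precedes it below -/
import Mathlib

section
/- If (X₁,…,X_d) maximizes E(Y₁⋯Y_d) over all couplings with Y_i ~ F_i, then for every subset I ⊆ {1,…,d}, the random variables ∏_{i∈I} X_i and ∏_{i∉I} X_i are comonotonic. Symmetrically, if (X₁,…,X_d) minimizes the expected product, then for every subset I, ∏_{i∈I} X_i and ∏_{i∉I} X_i are antimonotonic. -/
open MeasureTheory Set

/-- Two random variables are comonotonic if both are (a.s.) nondecreasing functions of a
common random variable. -/
def Comonotone2 {Ω : Type*} [MeasurableSpace Ω] (μ : Measure Ω) (Z W : Ω → ℝ) : Prop :=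
  ∃ (T : Ω → ℝ) (f g : ℝ → ℝ), Monotone f ∧ Monotone g ∧
    (∀ᵐ ω ∂μ, Z ω = f (T ω)) ∧ (∀ᵐ ω ∂μ, W ω = g (T ω))

/-- Two random variables are antimonotonic if `Z` and `−W` are comonotonic. -/
def Antimonotone2 {Ω : Type*} [MeasurableSpace Ω] (μ : Measure Ω) (Z W : Ω → ℝ) : Prop :=
  Comonotone2 μ Z (fun ω => -(W ω))

/-!
Fix `I` and write `Z = ∏_{i ∈ I} X_i`, `W = ∏_{i ∉ I} X_i`. Given a swap-invariant set
`E ⊆ Ω × Ω`, keep the block `I` at `ω` and take the block `Iᶜ` at `ω'` when `(ω, ω') ∈ E`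
and at `ω` otherwise; this is again a coupling of the marginals on `μ ⊗ μ`, so maximality gives
`∫_E Z(ω) (W(ω) - W(ω')) ≥ 0`. Symmetrising in `(ω, ω')`, `∫_E (Z(ω) - Z(ω'))(W(ω) - W(ω')) ≥ 0`,
so the set where this integrand is negative is null. Hence the support of the law of `(Z, W)`
is a chain for the product order on `ℝ²`, and on such a chain both coordinates are nondecreasing
functions of their sum. The minimising case is the maximising one for `(Z, -W)`.
-/

lemma exists_monotone_eq_fst_of_concordant {S : Set (ℝ × ℝ)} (hne : S.Nonempty)
    (hS : ∀ a ∈ S, ∀ b ∈ S, 0 ≤ (a.1 - b.1) * (a.2 - b.2)) :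
    ∃ f : ℝ → ℝ, Monotone f ∧ ∀ a ∈ S, f (a.1 + a.2) = a.1 := by
  obtain ⟨p, hp⟩ := hne
  have : Nonempty S := ⟨⟨p, hp⟩⟩
  have hbdd : ∀ t, BddAbove (range fun b : S => min b.1.1 (t - b.1.2)) := by
    refine fun t => ⟨max p.1 (t - p.2), ?_⟩
    rintro _ ⟨⟨b, hb⟩, rfl⟩
    have := hS b hb p hp
    rcases le_or_gt b.1 p.1 with h | h
    · exact (min_le_left _ _).trans (le_max_of_le_left h)
    · exact (min_le_right _ _).trans (le_max_of_le_right (by nlinarith))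
  -- for `a ∈ S` and `t = a.1 + a.2`, every term is `≤ a.1` and the term at `b = a` is `a.1`
  refine ⟨fun t => ⨆ b : S, min b.1.1 (t - b.1.2), fun s t hst => ?_, fun a ha => ?_⟩
  · exact ciSup_mono (hbdd t) fun b => min_le_min_left _ (by linarith)
  · refine le_antisymm (ciSup_le fun ⟨b, hb⟩ => ?_) (le_ciSup_of_le (hbdd _) ⟨a, ha⟩ (by simp))
    have := hS a ha b hb
    rcases le_or_gt b.1 a.1 with h | h
    · exact (min_le_left _ _).trans h
    · exact (min_le_right _ _).trans (by nlinarith)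

lemma concordant_of_mem_support {ν : Measure (ℝ × ℝ)} [SFinite ν]
    (h : ∀ᵐ q ∂ν.prod ν, 0 ≤ (q.1.1 - q.2.1) * (q.1.2 - q.2.2)) :
    ∀ a ∈ ν.support, ∀ b ∈ ν.support, 0 ≤ (a.1 - b.1) * (a.2 - b.2) := by
  intro a ha b hb
  by_contra! hlt
  have hB : IsOpen {q : (ℝ × ℝ) × (ℝ × ℝ) | (q.1.1 - q.2.1) * (q.1.2 - q.2.2) < 0} :=
    isOpen_lt (by fun_prop) continuous_const
  obtain ⟨U, V, hU, hV, haU, hbV, hUV⟩ := isOpen_prod_iff.mp hB a b hlt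
  have hpos : 0 < (ν.prod ν) (U ×ˢ V) := by
    rw [Measure.prod_prod]
    exact ENNReal.mul_pos ((ν.mem_support_iff_forall a).1 ha U (hU.mem_nhds haU)).ne'
      ((ν.mem_support_iff_forall b).1 hb V (hV.mem_nhds hbV)).ne'
  refine hpos.ne' (measure_mono_null hUV ?_)
  simpa [ae_iff] using h

lemma comonotone2_of_ae_concordant {Ω : Type*} [MeasurableSpace Ω] {μ : Measure Ω}
    [IsProbabilityMeasure μ] {Z W : Ω → ℝ} (hZ : Measurable Z) (hW : Measurable W)
    (h : ∀ᵐ p ∂μ.prod μ, 0 ≤ (Z p.1 - Z p.2) * (W p.1 - W p.2)) : Comonotone2 μ Z W := by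
  have hφ : Measurable fun ω => (Z ω, W ω) := hZ.prodMk hW
  set ν := μ.map fun ω => (Z ω, W ω)
  have hν : ∀ᵐ q ∂ν.prod ν, 0 ≤ (q.1.1 - q.2.1) * (q.1.2 - q.2.2) := by
    rw [Measure.map_prod_map μ μ hφ hφ, ae_map_iff (hφ.prodMap hφ).aemeasurable
      (measurableSet_le measurable_const (by fun_prop))]
    exact h
  have hS := concordant_of_mem_support hν
  have : IsProbabilityMeasure ν := Measure.isProbabilityMeasure_map hφ.aemeasurable
  obtain ⟨p, hp⟩ : ν.support.Nonempty := Measure.nonempty_support (IsProbabilityMeasure.ne_zero ν)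
  obtain ⟨f, hf, hfS⟩ := exists_monotone_eq_fst_of_concordant ⟨p, hp⟩ hS
  obtain ⟨g, hg, hgS⟩ := exists_monotone_eq_fst_of_concordant (S := Prod.swap ⁻¹' ν.support)
    ⟨p.swap, hp⟩ fun a ha b hb => by
      simpa only [Prod.fst_swap, Prod.snd_swap, mul_comm] using hS _ ha _ hb
  have hsupp : ∀ᵐ ω ∂μ, (Z ω, W ω) ∈ ν.support :=
    ae_of_ae_map hφ.aemeasurable Measure.support_mem_ae
  refine ⟨fun ω => Z ω + W ω, f, g, hf, hg, ?_, ?_⟩ <;> filter_upwards [hsupp] with ω hω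
  · exact (hfS _ hω).symm
  · simpa [add_comm] using (hgS (W ω, Z ω) hω).symm

lemma measure_eq_zero_of_neg_of_setIntegral_nonneg {α : Type*} [MeasurableSpace α]
    {μ : Measure α} {E : Set α} {f : α → ℝ} (hE : MeasurableSet E) (hf : IntegrableOn f E μ)
    (hneg : ∀ x ∈ E, f x < 0) (hint : 0 ≤ ∫ x in E, f x ∂μ) : μ E = 0 := by
  have hnonneg : 0 ≤ᵐ[μ.restrict E] fun x => -f x :=
    (ae_restrict_mem hE).mono fun x hx => (neg_pos.2 (hneg x hx)).le
  have hsupp : Function.support (fun x => -f x) ∩ E = E :=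
    inter_eq_self_of_subset_right fun x hx => neg_ne_zero.2 (hneg x hx).ne
  have h := (setIntegral_pos_iff_support_of_nonneg_ae hnonneg hf.neg).not
  rwa [integral_neg, neg_pos, not_lt, not_lt, hsupp, nonpos_iff_eq_zero, iff_true_intro hint,
    true_iff] at h

section Swap

variable {Ω : Type*} [MeasurableSpace Ω] {μ : Measure Ω} {E : Set (Ω × Ω)}

lemma setIntegral_comp_swap [SFinite μ] (hsymm : Prod.swap ⁻¹' E = E) (F : Ω × Ω → ℝ) :
    ∫ p in E, F p.swap ∂μ.prod μ = ∫ p in E, F p ∂μ.prod μ := by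
  conv_lhs => rw [← hsymm]
  exact Measure.measurePreserving_swap.setIntegral_preimage_emb
    MeasurableEquiv.prodComm.measurableEmbedding F E

lemma map_piecewise_snd_fst_prod [IsProbabilityMeasure μ] [DecidablePred (· ∈ E)]
    (hE : MeasurableSet E) (hsymm : Prod.swap ⁻¹' E = E) :
    (μ.prod μ).map (E.piecewise Prod.snd Prod.fst) = μ := by
  ext s hs
  have hswap : (μ.prod μ) (Prod.snd ⁻¹' s ∩ E) = (μ.prod μ) (Prod.fst ⁻¹' s ∩ E) := by
    rw [← Measure.measurePreserving_swap.measure_preimage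
      ((measurable_fst hs).inter hE).nullMeasurableSet, preimage_inter, hsymm]
    rfl
  rw [Measure.map_apply (measurable_snd.piecewise hE measurable_fst) hs, piecewise_preimage,
    Set.ite, measure_union (disjoint_sdiff_right.mono_left inter_subset_right)
      ((measurable_fst hs).diff hE), hswap, measure_inter_add_sdiff _ hE, ← prod_univ,
    Measure.prod_prod, measure_univ, mul_one]

end Swap

section Rearrangement

variable {Ω : Type*} [MeasurableSpace Ω] {μ : Measure Ω} [IsProbabilityMeasure μ]
  {Z W : Ω → ℝ}

lemma prod_measure_eq_zero_of_forall_integral_le (hZ : Measurable Z) (hW : Measurable W)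
    (hZW : Integrable (fun ω => Z ω * W ω) μ)
    (hopt : ∀ ψ : Ω × Ω → Ω, Measurable ψ → (μ.prod μ).map ψ = μ →
      Integrable (fun p => Z p.1 * W (ψ p)) (μ.prod μ) →
      ∫ p, Z p.1 * W (ψ p) ∂μ.prod μ ≤ ∫ ω, Z ω * W ω ∂μ)
    {E : Set (Ω × Ω)} (hE : MeasurableSet E) (hsymm : Prod.swap ⁻¹' E = E)
    (hneg : ∀ p ∈ E, (Z p.1 - Z p.2) * (W p.1 - W p.2) < 0) {C : ℝ}
    (hbdd : ∀ p ∈ E, |Z p.1 * W p.1 - Z p.1 * W p.2| ≤ C) :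
    (μ.prod μ) E = 0 := by
  classical
  set gain : Ω × Ω → ℝ := fun p => Z p.1 * W p.1 - Z p.1 * W p.2
  have hgain_meas : Measurable gain := by fun_prop
  have hgain : IntegrableOn gain E (μ.prod μ) := .of_bound (measure_lt_top _ _)
    hgain_meas.aestronglyMeasurable C ((ae_restrict_mem hE).mono hbdd)
  have hfst : Integrable (fun p : Ω × Ω => Z p.1 * W p.1) (μ.prod μ) :=
    hZW.comp_fst μ
  have hψ : ∀ p, Z p.1 * W (E.piecewise Prod.snd Prod.fst p) =
      Z p.1 * W p.1 - E.indicator gain p := by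
    intro p
    by_cases hp : p ∈ E <;> simp [hp, gain]
  have hopt' := hopt _ (measurable_snd.piecewise hE measurable_fst)
    (map_piecewise_snd_fst_prod hE hsymm)
    ((hfst.sub (hgain.integrable_indicator hE)).congr (.of_forall fun p => (hψ p).symm))
  simp only [hψ] at hopt'
  rw [integral_sub hfst (hgain.integrable_indicator hE), integral_indicator hE,
    integral_fun_fst (fun ω => Z ω * W ω), probReal_univ, one_smul] at hopt'
  have hswap_mem : ∀ p ∈ E, p.swap ∈ E := fun p hp => by rwa [← hsymm] at hp
  have hq : ∀ p, (Z p.1 - Z p.2) * (W p.1 - W p.2) = gain p + gain p.swap := fun p => by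
    simp only [gain, Prod.fst_swap, Prod.snd_swap]; ring
  have hgain_swap : IntegrableOn (fun p => gain p.swap) E (μ.prod μ) :=
    .of_bound (measure_lt_top _ _) (hgain_meas.comp measurable_swap).aestronglyMeasurable C
      ((ae_restrict_mem hE).mono fun p hp => hbdd _ (hswap_mem p hp))
  refine measure_eq_zero_of_neg_of_setIntegral_nonneg hE ?_ hneg ?_
  · simp only [hq]
    exact hgain.add hgain_swap
  · rw [funext hq, integral_add hgain hgain_swap, setIntegral_comp_swap hsymm gain]
    linarith

lemma ae_concordant_of_forall_integral_le (hZ : Measurable Z) (hW : Measurable W)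
    (hZW : Integrable (fun ω => Z ω * W ω) μ)
    (hopt : ∀ ψ : Ω × Ω → Ω, Measurable ψ → (μ.prod μ).map ψ = μ →
      Integrable (fun p => Z p.1 * W (ψ p)) (μ.prod μ) →
      ∫ p, Z p.1 * W (ψ p) ∂μ.prod μ ≤ ∫ ω, Z ω * W ω ∂μ) :
    ∀ᵐ p ∂μ.prod μ, 0 ≤ (Z p.1 - Z p.2) * (W p.1 - W p.2) := by
  set q : Ω × Ω → ℝ := fun p => (Z p.1 - Z p.2) * (W p.1 - W p.2)
  set gain : Ω × Ω → ℝ := fun p => Z p.1 * W p.1 - Z p.1 * W p.2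
  set E : ℕ → Set (Ω × Ω) := fun n => {p | q p < 0 ∧ |gain p| ≤ n ∧ |gain p.swap| ≤ n}
  have hq : Measurable q := by fun_prop
  have hgain : Measurable gain := by fun_prop
  have hE : ∀ n, MeasurableSet (E n) := fun n =>
    (measurableSet_lt hq measurable_const).inter
      ((measurableSet_le hgain.abs measurable_const).inter
        (measurableSet_le (hgain.comp measurable_swap).abs measurable_const))
  have hq_swap : ∀ p, q p.swap = q p := fun p => by
    simp only [q, Prod.fst_swap, Prod.snd_swap]; ring
  have hsymm : ∀ n, Prod.swap ⁻¹' E n = E n := fun n => by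
    ext p
    simp only [E, mem_preimage, mem_ofPred_eq, hq_swap, Prod.swap_swap]
    tauto
  have hnull : ∀ n, (μ.prod μ) (E n) = 0 := fun n =>
    prod_measure_eq_zero_of_forall_integral_le hZ hW hZW hopt (hE n) (hsymm n)
      (fun p hp => hp.1) fun p hp => hp.2.1
  refine measure_mono_null (fun p hp => ?_) (measure_iUnion_null hnull)
  obtain ⟨n, hn⟩ := exists_nat_ge (max |gain p| |gain p.swap|)
  exact mem_iUnion.2 ⟨n, not_le.1 hp, (le_max_left _ _).trans hn, (le_max_right _ _).trans hn⟩

lemma comonotone2_of_forall_integral_le (hZ : Measurable Z) (hW : Measurable W)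
    (hZW : Integrable (fun ω => Z ω * W ω) μ)
    (hopt : ∀ ψ : Ω × Ω → Ω, Measurable ψ → (μ.prod μ).map ψ = μ →
      Integrable (fun p => Z p.1 * W (ψ p)) (μ.prod μ) →
      ∫ p, Z p.1 * W (ψ p) ∂μ.prod μ ≤ ∫ ω, Z ω * W ω ∂μ) :
    Comonotone2 μ Z W :=
  comonotone2_of_ae_concordant hZ hW (ae_concordant_of_forall_integral_le hZ hW hZW hopt)

end Rearrangement

section Coupling

universe v

variable {ι : Type*} [Fintype ι]

-- Couplings are moved to `ULift (ι → ℝ)` because the optimality hypothesis only quantifies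
-- over sample spaces of one fixed universe.
lemma exists_ulift_law {Ω' : Type*} [MeasurableSpace Ω'] {μ' : Measure Ω'}
    [IsProbabilityMeasure μ'] {Y : ι → Ω' → ℝ} (hY : ∀ i, Measurable (Y i))
    (hint : Integrable (fun ω => ∏ i, Y i ω) μ') :
    ∃ ν : Measure (ULift.{v} (ι → ℝ)), IsProbabilityMeasure ν ∧
      (∀ i, ν.map (fun y => y.down i) = μ'.map (Y i)) ∧
      Integrable (fun y => ∏ i, y.down i) ν ∧
      ∫ y, ∏ i, y.down i ∂ν = ∫ ω, ∏ i, Y i ω ∂μ' := by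
  have hΦ : Measurable fun ω => ULift.up.{v} fun i => Y i ω :=
    measurable_up.comp (measurable_pi_lambda _ hY)
  have hprod : Measurable fun y : ULift.{v} (ι → ℝ) => ∏ i, y.down i := by fun_prop
  refine ⟨μ'.map _, Measure.isProbabilityMeasure_map hΦ.aemeasurable, fun i => ?_,
    (integrable_map_measure hprod.aestronglyMeasurable hΦ.aemeasurable).2 hint,
    integral_map hΦ.aemeasurable hprod.aestronglyMeasurable⟩
  rw [Measure.map_map (by fun_prop) hΦ]
  rfl

variable {Ω : Type*} [MeasurableSpace Ω] {μ : Measure Ω} [IsProbabilityMeasure μ]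
  {X : ι → Ω → ℝ}

lemma exists_ulift_coupling_of_map_eq [DecidableEq ι] (hX : ∀ i, Measurable (X i)) (I : Finset ι)
    {ψ : Ω × Ω → Ω} (hψ : Measurable ψ) (hψμ : (μ.prod μ).map ψ = μ)
    (hint : Integrable (fun p => (∏ i ∈ I, X i p.1) * ∏ i ∈ Iᶜ, X i (ψ p)) (μ.prod μ)) :
    ∃ ν : Measure (ULift.{v} (ι → ℝ)), IsProbabilityMeasure ν ∧
      (∀ i, ν.map (fun y => y.down i) = μ.map (X i)) ∧
      Integrable (fun y => ∏ i, y.down i) ν ∧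
      ∫ y, ∏ i, y.down i ∂ν = ∫ p, (∏ i ∈ I, X i p.1) * ∏ i ∈ Iᶜ, X i (ψ p) ∂μ.prod μ := by
  set Y : ι → Ω × Ω → ℝ := fun i p => if i ∈ I then X i p.1 else X i (ψ p)
  have hY : ∀ p, ∏ i, Y i p = (∏ i ∈ I, X i p.1) * ∏ i ∈ Iᶜ, X i (ψ p) := fun p => by
    rw [← Finset.prod_mul_prod_compl I]
    congr 1 <;> refine Finset.prod_congr rfl fun i hi => ?_
    · simp [Y, hi]
    · simp [Y, Finset.mem_compl.1 hi]
  have hYm : ∀ i, Measurable (Y i) := fun i => by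
    by_cases hi : i ∈ I <;> simp only [Y, hi, if_true, if_false]
    exacts [(hX i).comp measurable_fst, (hX i).comp hψ]
  obtain ⟨ν, hν, hmarg, hνint, hνeq⟩ := exists_ulift_law.{v} hYm (by simpa only [hY] using hint)
  refine ⟨ν, hν, fun i => ?_, hνint, by simpa only [hY] using hνeq⟩
  rw [hmarg i]
  by_cases hi : i ∈ I <;> simp only [Y, hi, if_true, if_false]
  · rw [← Function.comp_def, ← Measure.map_map (hX i) measurable_fst, Measure.map_fst_prod,
      measure_univ, one_smul]
  · rw [← Function.comp_def, ← Measure.map_map (hX i) hψ, hψμ]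

end Coupling

theorem stmt_15_general {Ω : Type*} [MeasurableSpace Ω] (μ : Measure Ω) [IsProbabilityMeasure μ]
    (d : ℕ) (X : Fin d → Ω → ℝ) (hm : ∀ i, Measurable (X i))
    (hInt : Integrable (fun ω => ∏ i, X i ω) μ) :
    ((∀ (Ω' : Type*) [MeasurableSpace Ω'] (μ' : Measure Ω') [IsProbabilityMeasure μ']
        (Y : Fin d → Ω' → ℝ), (∀ i, Measurable (Y i)) →
        (∀ i, μ'.map (Y i) = μ.map (X i)) →
        Integrable (fun ω => ∏ i, Y i ω) μ' →
        ∫ ω, ∏ i, Y i ω ∂μ' ≤ ∫ ω, ∏ i, X i ω ∂μ) →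
      ∀ I : Finset (Fin d),
        Comonotone2 μ (fun ω => ∏ i ∈ I, X i ω) (fun ω => ∏ i ∈ Iᶜ, X i ω)) ∧
    ((∀ (Ω' : Type*) [MeasurableSpace Ω'] (μ' : Measure Ω') [IsProbabilityMeasure μ']
        (Y : Fin d → Ω' → ℝ), (∀ i, Measurable (Y i)) →
        (∀ i, μ'.map (Y i) = μ.map (X i)) →
        Integrable (fun ω => ∏ i, Y i ω) μ' →
        ∫ ω, ∏ i, X i ω ∂μ ≤ ∫ ω, ∏ i, Y i ω ∂μ') →
      ∀ I : Finset (Fin d),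
        Antimonotone2 μ (fun ω => ∏ i ∈ I, X i ω) (fun ω => ∏ i ∈ Iᶜ, X i ω)) := by
  have hprod : ∀ J : Finset (Fin d), Measurable fun ω => ∏ i ∈ J, X i ω :=
    fun J => Finset.measurable_prod J fun i _ => hm i
  have hsplit : ∀ I : Finset (Fin d),
      (fun ω => (∏ i ∈ I, X i ω) * ∏ i ∈ Iᶜ, X i ω) = fun ω => ∏ i, X i ω :=
    fun I => funext fun ω => Finset.prod_mul_prod_compl I _
  constructor
  · intro hmax I
    refine comonotone2_of_forall_integral_le (hprod I) (hprod Iᶜ) (hsplit I ▸ hInt)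
      fun ψ hψ hψμ hint => ?_
    obtain ⟨ν, hν, hmarg, hνint, hνeq⟩ := exists_ulift_coupling_of_map_eq hm I hψ hψμ hint
    rw [hsplit I, ← hνeq]
    exact hmax _ ν _ (fun i => (measurable_pi_apply i).comp measurable_down) hmarg hνint
  · intro hmin I
    refine comonotone2_of_forall_integral_le (hprod I) (hprod Iᶜ).neg
      (by simpa only [mul_neg] using (hsplit I ▸ hInt).neg) fun ψ hψ hψμ hint => ?_
    simp only [mul_neg, integral_neg] at hint ⊢
    obtain ⟨ν, hν, hmarg, hνint, hνeq⟩ := exists_ulift_coupling_of_map_eq hm I hψ hψμ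
      (by simpa only [neg_neg] using hint.fun_neg)
    rw [neg_le_neg_iff, hsplit I, ← hνeq]
    exact hmin _ ν _ (fun i => (measurable_pi_apply i).comp measurable_down) hmarg hνint

/-- If `(X₁,…,X_d)` maximizes (resp. minimizes) the expected product over all couplings with
the same marginals, then for every subset `I` the partial products `∏_{i∈I} X_i` and
`∏_{i∉I} X_i` are comonotonic (resp. antimonotonic). -/
theorem stmt_15 {Ω : Type*} [MeasurableSpace Ω] (μ : Measure Ω) [IsProbabilityMeasure μ]
    (d : ℕ) (X : Fin d → Ω → ℝ) (hm : ∀ i, Measurable (X i))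
    (hL2 : ∀ i, MemLp (X i) 2 μ)
    (hInt : Integrable (fun ω => ∏ i, X i ω) μ) :
    ((∀ (Ω' : Type*) [MeasurableSpace Ω'] (μ' : Measure Ω') [IsProbabilityMeasure μ']
        (Y : Fin d → Ω' → ℝ), (∀ i, Measurable (Y i)) →
        (∀ i, μ'.map (Y i) = μ.map (X i)) →
        Integrable (fun ω => ∏ i, Y i ω) μ' →
        ∫ ω, ∏ i, Y i ω ∂μ' ≤ ∫ ω, ∏ i, X i ω ∂μ) →
      ∀ I : Finset (Fin d),
        Comonotone2 μ (fun ω => ∏ i ∈ I, X i ω) (fun ω => ∏ i ∈ Iᶜ, X i ω)) ∧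
    ((∀ (Ω' : Type*) [MeasurableSpace Ω'] (μ' : Measure Ω') [IsProbabilityMeasure μ']
        (Y : Fin d → Ω' → ℝ), (∀ i, Measurable (Y i)) →
        (∀ i, μ'.map (Y i) = μ.map (X i)) →
        Integrable (fun ω => ∏ i, Y i ω) μ' →
        ∫ ω, ∏ i, X i ω ∂μ ≤ ∫ ω, ∏ i, Y i ω ∂μ') →
      ∀ I : Finset (Fin d),
        Antimonotone2 μ (fun ω => ∏ i ∈ I, X i ω) (fun ω => ∏ i ∈ Iᶜ, X i ω)) :=
  stmt_15_general μ d X hm hInt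
end

section
/- Define the standardized rank coskewness of X₁, X₂, X₃ with strictly increasing continuous distribution functions F₁, F₂, F₃ by RS(X₁,X₂,X₃) = 32·E((F₁(X₁)−1/2)(F₂(X₂)−1/2)(F₃(X₃)−1/2)). Then −1 ≤ RS(X₁,X₂,X₃) ≤ 1, RS is invariant under strictly increasing transformations of the coordinates (RS(f₁(X₁),f₂(X₂),f₃(X₃)) = RS(X₁,X₂,X₃) for strictly increasing f_i), and RS(X₁,X₂,X₃) = 0 when X₁, X₂, X₃ are independent. -/
/-!
The rank `U = cdf (μ.map X) ∘ X` of a variable whose distribution function is continuous and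
strictly increasing is uniform on `[0, 1]`, so `U - 1/2` has mean `0` and `E|U - 1/2|³ = 1/32`.
Pointwise AM–GM, `|abc| ≤ (|a|³ + |b|³ + |c|³)/3`, then bounds `|E ∏ (Uᵢ - 1/2)|` by `1/32`;
under independence the expectation factors into means, which vanish; and a strictly increasing
`f` satisfies `{f X ≤ f x} = {X ≤ x}`, so it does not change the ranks.
-/

open MeasureTheory Set ProbabilityTheory

lemma mul_mul_le_add_pow_three_div_three {a b c : ℝ} (ha : 0 ≤ a) (hb : 0 ≤ b) (hc : 0 ≤ c) :
    a * b * c ≤ (a ^ 3 + b ^ 3 + c ^ 3) / 3 := by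
  have key : a ^ 3 + b ^ 3 + c ^ 3 - 3 * (a * b * c)
      = (a + b + c) * ((a - b) ^ 2 + (b - c) ^ 2 + (c - a) ^ 2) / 2 := by ring
  have : 0 ≤ (a + b + c) * ((a - b) ^ 2 + (b - c) ^ 2 + (c - a) ^ 2) / 2 := by positivity
  linarith

lemma abs_integral_mul_mul_le {Ω : Type*} [MeasurableSpace Ω] {μ : Measure Ω} {a b c : Ω → ℝ}
    (ha : Integrable (fun ω => |a ω| ^ 3) μ) (hb : Integrable (fun ω => |b ω| ^ 3) μ)
    (hc : Integrable (fun ω => |c ω| ^ 3) μ) :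
    |∫ ω, a ω * b ω * c ω ∂μ|
      ≤ (∫ ω, |a ω| ^ 3 ∂μ + ∫ ω, |b ω| ^ 3 ∂μ + ∫ ω, |c ω| ^ 3 ∂μ) / 3 :=
  calc |∫ ω, a ω * b ω * c ω ∂μ| ≤ ∫ ω, |a ω * b ω * c ω| ∂μ := abs_integral_le_integral_abs
    _ ≤ ∫ ω, (|a ω| ^ 3 + |b ω| ^ 3 + |c ω| ^ 3) / 3 ∂μ :=
      integral_mono_of_nonneg (ae_of_all _ fun _ => abs_nonneg _) (((ha.add hb).add hc).div_const 3)
        (ae_of_all _ fun ω => by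
          simpa only [abs_mul] using mul_mul_le_add_pow_three_div_three
            (abs_nonneg (a ω)) (abs_nonneg (b ω)) (abs_nonneg (c ω)))
    _ = _ := by
      rw [integral_div, integral_add (f := fun ω => |a ω| ^ 3 + |b ω| ^ 3) (ha.add hb) hc,
        integral_add ha hb]

lemma integral_Icc_zero_one_sub_half : ∫ x in Icc (0 : ℝ) 1, (x - 1 / 2) = 0 := by
  rw [integral_Icc_eq_integral_Ioc, ← intervalIntegral.integral_of_le zero_le_one]
  norm_num [intervalIntegral.integral_sub]

lemma integral_Icc_zero_one_abs_sub_half_pow_three :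
    ∫ x in Icc (0 : ℝ) 1, |x - 1 / 2| ^ 3 = 1 / 32 := by
  have hcont : Continuous fun x : ℝ => |x| ^ 3 := by fun_prop
  have hhalf : ∫ x in (0 : ℝ)..(1 / 2), |x| ^ 3 = 1 / 64 := by
    rw [intervalIntegral.integral_congr (g := fun x => x ^ 3) fun x hx => by
      rw [uIcc_of_le (by norm_num)] at hx
      simp only [abs_of_nonneg hx.1]]
    norm_num [integral_pow]
  have hneg : ∫ x in (-(1 / 2) : ℝ)..0, |x| ^ 3 = ∫ x in (0 : ℝ)..(1 / 2), |x| ^ 3 := by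
    simpa using (intervalIntegral.integral_comp_neg (a := 0) (b := 1 / 2) (fun x => |x| ^ 3)).symm
  calc ∫ x in Icc (0 : ℝ) 1, |x - 1 / 2| ^ 3
      = ∫ x in (-(1 / 2) : ℝ)..(1 / 2), |x| ^ 3 := by
        rw [integral_Icc_eq_integral_Ioc, ← intervalIntegral.integral_of_le zero_le_one,
          intervalIntegral.integral_comp_sub_right (fun x => |x| ^ 3)]
        norm_num
    _ = 1 / 32 := by
        rw [← intervalIntegral.integral_add_adjacent_intervals (b := 0)
          (hcont.intervalIntegrable _ _) (hcont.intervalIntegrable _ _), hneg, hhalf]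
        norm_num

lemma StrictMono.map_apply_Iic (ν : Measure ℝ) {f : ℝ → ℝ} (hf : StrictMono f) (x : ℝ) :
    ν.map f (Iic (f x)) = ν (Iic x) := by
  rw [Measure.map_apply hf.monotone.measurable measurableSet_Iic]
  congr 1
  ext y
  exact hf.le_iff_le

lemma map_cdf_eq_volume_restrict_Icc (ν : Measure ℝ) [IsProbabilityMeasure ν]
    (hcont : Continuous (cdf ν)) (hmono : StrictMono (cdf ν)) :
    ν.map (cdf ν) = volume.restrict (Icc 0 1) := by
  refine Measure.ext_of_Iic _ _ fun t => ?_
  have hIcc : Iic t ∩ Icc 0 1 = Icc 0 (min t 1) := by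
    ext x
    simp only [mem_inter_iff, mem_Iic, mem_Icc, le_min_iff]
    tauto
  rw [Measure.restrict_apply measurableSet_Iic, hIcc, Real.volume_Icc, sub_zero]
  rcases le_or_gt t 0 with ht0 | ht0
  · have hpos : ∀ x, 0 < cdf ν x := fun x => (cdf_nonneg ν (x - 1)).trans_lt (hmono (by linarith))
    have : cdf ν ⁻¹' Iic t = ∅ :=
      eq_empty_of_forall_notMem fun x hx => (hpos x).not_ge (le_trans hx ht0)
    rw [Measure.map_apply (monotone_cdf ν).measurable measurableSet_Iic, this, measure_empty,
      ENNReal.ofReal_of_nonpos (min_le_of_left_le ht0)]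
  rcases le_or_gt 1 t with ht1 | ht1
  · have : cdf ν ⁻¹' Iic t = univ := eq_univ_of_forall fun x => (cdf_le_one ν x).trans ht1
    rw [Measure.map_apply (monotone_cdf ν).measurable measurableSet_Iic, this, measure_univ,
      min_eq_right ht1, ENNReal.ofReal_one]
  obtain ⟨s, rfl⟩ : t ∈ range (cdf ν) := mem_range_of_exists_le_of_exists_ge hcont
    ((tendsto_cdf_atBot ν).eventually (eventually_le_nhds ht0)).exists
    ((tendsto_cdf_atTop ν).eventually (eventually_ge_nhds ht1)).exists
  rw [hmono.map_apply_Iic, min_eq_left ht1.le, ofReal_cdf]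

section RankTransform

variable {Ω : Type*} [MeasurableSpace Ω] {μ : Measure Ω} [IsProbabilityMeasure μ] {X : Ω → ℝ}

lemma map_cdf_map_comp_eq_volume_restrict_Icc (hX : Measurable X)
    (hcont : Continuous (cdf (μ.map X))) (hmono : StrictMono (cdf (μ.map X))) :
    μ.map (fun ω => cdf (μ.map X) (X ω)) = volume.restrict (Icc 0 1) := by
  have := Measure.isProbabilityMeasure_map (μ := μ) hX.aemeasurable
  rw [← map_cdf_eq_volume_restrict_Icc _ hcont hmono,
    Measure.map_map (monotone_cdf _).measurable hX]
  rfl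

lemma integral_comp_cdf_map (hX : Measurable X) (hcont : Continuous (cdf (μ.map X)))
    (hmono : StrictMono (cdf (μ.map X))) {g : ℝ → ℝ}
    (hg : AEStronglyMeasurable g (volume.restrict (Icc 0 1))) :
    ∫ ω, g (cdf (μ.map X) (X ω)) ∂μ = ∫ x in Icc 0 1, g x := by
  rw [← map_cdf_map_comp_eq_volume_restrict_Icc hX hcont hmono] at hg ⊢
  exact (integral_map ((monotone_cdf _).measurable.comp hX).aemeasurable hg).symm

lemma integrable_comp_cdf_map (hX : Measurable X) (hcont : Continuous (cdf (μ.map X)))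
    (hmono : StrictMono (cdf (μ.map X))) {g : ℝ → ℝ} (hg : IntegrableOn g (Icc 0 1)) :
    Integrable (fun ω => g (cdf (μ.map X) (X ω))) μ := by
  rw [IntegrableOn, ← map_cdf_map_comp_eq_volume_restrict_Icc hX hcont hmono] at hg
  exact hg.comp_measurable ((monotone_cdf _).measurable.comp hX)

lemma integral_cdf_map_sub_half (hX : Measurable X) (hcont : Continuous (cdf (μ.map X)))
    (hmono : StrictMono (cdf (μ.map X))) :
    ∫ ω, (cdf (μ.map X) (X ω) - 1 / 2) ∂μ = 0 := by
  rw [integral_comp_cdf_map hX hcont hmono (g := fun x => x - 1 / 2) (by fun_prop),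
    integral_Icc_zero_one_sub_half]

lemma integral_abs_cdf_map_sub_half_pow_three (hX : Measurable X)
    (hcont : Continuous (cdf (μ.map X))) (hmono : StrictMono (cdf (μ.map X))) :
    ∫ ω, |cdf (μ.map X) (X ω) - 1 / 2| ^ 3 ∂μ = 1 / 32 := by
  rw [integral_comp_cdf_map hX hcont hmono (g := fun x => |x - 1 / 2| ^ 3) (by fun_prop),
    integral_Icc_zero_one_abs_sub_half_pow_three]

lemma integrable_abs_cdf_map_sub_half_pow_three (hX : Measurable X)
    (hcont : Continuous (cdf (μ.map X))) (hmono : StrictMono (cdf (μ.map X))) :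
    Integrable (fun ω => |cdf (μ.map X) (X ω) - 1 / 2| ^ 3) μ :=
  integrable_comp_cdf_map hX hcont hmono (g := fun x => |x - 1 / 2| ^ 3)
    (Continuous.integrableOn_Icc (by fun_prop))

end RankTransform

section Coskewness

variable {Ω : Type*} [MeasurableSpace Ω] {μ : Measure Ω} [IsProbabilityMeasure μ]

lemma abs_integral_prod_cdf_map_sub_half_le {X : Fin 3 → Ω → ℝ} (hX : ∀ i, Measurable (X i))
    (hcont : ∀ i, Continuous (cdf (μ.map (X i))))
    (hmono : ∀ i, StrictMono (cdf (μ.map (X i)))) :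
    |∫ ω, ∏ i, (cdf (μ.map (X i)) (X i ω) - 1 / 2) ∂μ| ≤ 1 / 32 := by
  simp only [Fin.prod_univ_three]
  refine (abs_integral_mul_mul_le
    (integrable_abs_cdf_map_sub_half_pow_three (hX 0) (hcont 0) (hmono 0))
    (integrable_abs_cdf_map_sub_half_pow_three (hX 1) (hcont 1) (hmono 1))
    (integrable_abs_cdf_map_sub_half_pow_three (hX 2) (hcont 2) (hmono 2))).trans_eq ?_
  rw [integral_abs_cdf_map_sub_half_pow_three (hX 0) (hcont 0) (hmono 0),
    integral_abs_cdf_map_sub_half_pow_three (hX 1) (hcont 1) (hmono 1),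
    integral_abs_cdf_map_sub_half_pow_three (hX 2) (hcont 2) (hmono 2)]
  norm_num

lemma integral_prod_cdf_map_sub_half_eq_zero {ι : Type*} [Fintype ι] [Nonempty ι]
    {X : ι → Ω → ℝ} (hind : iIndepFun X μ) (hX : ∀ i, Measurable (X i))
    (hcont : ∀ i, Continuous (cdf (μ.map (X i))))
    (hmono : ∀ i, StrictMono (cdf (μ.map (X i)))) :
    ∫ ω, ∏ i, (cdf (μ.map (X i)) (X i ω) - 1 / 2) ∂μ = 0 := by
  rw [hind.integral_fun_prod_comp (fun i => (hX i).aemeasurable)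
    (fun i => ((monotone_cdf _).measurable.sub_const _).aestronglyMeasurable)]
  exact Finset.prod_eq_zero (Finset.mem_univ (Classical.arbitrary ι))
    (integral_cdf_map_sub_half (hX _) (hcont _) (hmono _))

end Coskewness

/-- Properties of the standardized rank coskewness
`RS(X₁,X₂,X₃) = 32 E((F₁(X₁)−1/2)(F₂(X₂)−1/2)(F₃(X₃)−1/2))`:
it lies in `[−1,1]`, is invariant under strictly increasing transformations of the
coordinates, and vanishes when `X₁, X₂, X₃` are independent. -/
theorem stmt_18 {Ω : Type*} [MeasurableSpace Ω] (μ : Measure Ω) [IsProbabilityMeasure μ]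
    (X : Fin 3 → Ω → ℝ) (F : Fin 3 → ℝ → ℝ)
    (hm : ∀ i, Measurable (X i))
    (hcdf : ∀ i x, F i x = ((μ.map (X i)) (Iic x)).toReal)
    (hcont : ∀ i, Continuous (F i)) (hmono : ∀ i, StrictMono (F i)) :
    (-1 ≤ 32 * ∫ ω, ∏ i, (F i (X i ω) - 1/2) ∂μ ∧
      32 * ∫ ω, ∏ i, (F i (X i ω) - 1/2) ∂μ ≤ 1) ∧
    (∀ (f G : Fin 3 → ℝ → ℝ), (∀ i, StrictMono (f i)) →
        (∀ i x, G i x = ((μ.map (fun ω => f i (X i ω))) (Iic x)).toReal) →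
        32 * ∫ ω, ∏ i, (G i (f i (X i ω)) - 1/2) ∂μ
          = 32 * ∫ ω, ∏ i, (F i (X i ω) - 1/2) ∂μ) ∧
    (iIndepFun X μ →
        32 * ∫ ω, ∏ i, (F i (X i ω) - 1/2) ∂μ = 0) := by
  have hF : ∀ i, F i = cdf (μ.map (X i)) := fun i => funext fun x => by
    have := Measure.isProbabilityMeasure_map (μ := μ) (hm i).aemeasurable
    rw [hcdf, cdf_eq_real, measureReal_def]
  simp only [hF] at hcont hmono ⊢
  refine ⟨?_, fun f G hf hG => ?_, fun hind => ?_⟩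
  · obtain ⟨hlower, hupper⟩ := abs_le.mp (abs_integral_prod_cdf_map_sub_half_le hm hcont hmono)
    constructor <;> linarith
  · refine congrArg _ (integral_congr_ae (ae_of_all _ fun ω => Finset.prod_congr rfl fun i _ => ?_))
    have hmap : μ.map (fun ω => f i (X i ω)) = (μ.map (X i)).map (f i) :=
      (Measure.map_map (hf i).monotone.measurable (hm i)).symm
    rw [hG, hmap, (hf i).map_apply_Iic, ← hcdf, hF]
  · rw [integral_prod_cdf_map_sub_half_eq_zero hind hm hcont hmono, mul_zero]
end

section
/- Let U, V, W be random variables each uniform on [0,1] (arbitrarily dependent). Then E((U−1/2)(V−1/2)(W−1/2)) ≤ 1/32, and the bound is attained; consequently the maximum coskewness of three Uniform[0,1] variables is 3√3/4. -/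
/-
Write `x = U - 1/2`, `y = V - 1/2`, `z = W - 1/2`. By AM-GM, `xyz ≤ (|x|³ + |y|³ + |z|³) / 3`,
and each `|x|³` has mean `∫₀¹ |t - 1/2|³ dt = 1/32`, so `E(xyz) ≤ 1/32`. Equality forces
`|x| = |y| = |z|` and `xyz ≥ 0`; it is attained by taking `U = t` uniform and, with probability
`1/2` each, `(V, W) = (t, max t (1 - t))` or `(V, W) = (1 - t, min t (1 - t))`.
-/

open MeasureTheory Set

/-- The uniform distribution on `[0,1]`. -/
noncomputable def unif01 : Measure ℝ := volume.restrict (Icc (0:ℝ) 1)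

open scoped ENNReal

lemma abs_mul_mul_le (x y z : ℝ) : |x * y * z| ≤ (|x| ^ 3 + |y| ^ 3 + |z| ^ 3) / 3 := by
  have ha := abs_nonneg x
  have hb := abs_nonneg y
  have hc := abs_nonneg z
  rw [abs_mul, abs_mul]
  nlinarith [sq_nonneg (|x| - |y|), sq_nonneg (|y| - |z|), sq_nonneg (|x| - |z|),
    mul_nonneg ha hb, mul_nonneg hb hc, mul_nonneg ha hc]

theorem integral_mul_mul_le {Ω : Type*} [MeasurableSpace Ω] {μ : Measure Ω} {X Y Z : Ω → ℝ}
    (hX : AEStronglyMeasurable X μ) (hY : AEStronglyMeasurable Y μ)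
    (hZ : AEStronglyMeasurable Z μ) (hX3 : Integrable (fun ω => |X ω| ^ 3) μ)
    (hY3 : Integrable (fun ω => |Y ω| ^ 3) μ) (hZ3 : Integrable (fun ω => |Z ω| ^ 3) μ) :
    ∫ ω, X ω * Y ω * Z ω ∂μ ≤ (∫ ω, |X ω| ^ 3 ∂μ + ∫ ω, |Y ω| ^ 3 ∂μ + ∫ ω, |Z ω| ^ 3 ∂μ) / 3 := by
  have hbound : Integrable (fun ω => (|X ω| ^ 3 + |Y ω| ^ 3 + |Z ω| ^ 3) / 3) μ :=
    ((hX3.add hY3).add hZ3).div_const 3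
  have hprod : Integrable (fun ω => X ω * Y ω * Z ω) μ :=
    hbound.mono ((hX.mul hY).mul hZ) <| ae_of_all _ fun ω =>
      (abs_mul_mul_le _ _ _).trans (le_abs_self _)
  calc ∫ ω, X ω * Y ω * Z ω ∂μ
      ≤ ∫ ω, (|X ω| ^ 3 + |Y ω| ^ 3 + |Z ω| ^ 3) / 3 ∂μ :=
        integral_mono hprod hbound fun ω => (le_abs_self _).trans (abs_mul_mul_le _ _ _)
    _ = _ := by
      rw [integral_div, integral_add _ hZ3, integral_add hX3 hY3]
      exact hX3.add hY3

theorem map_max_add_map_min {α β : Type*} [MeasurableSpace α] [TopologicalSpace β]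
    [MeasurableSpace β] [OpensMeasurableSpace β] [LinearOrder β] [SecondCountableTopology β]
    [OrderClosedTopology β] (μ : Measure α) {f g : α → β} (hf : Measurable f)
    (hg : Measurable g) :
    μ.map (fun x => max (f x) (g x)) + μ.map (fun x => min (f x) (g x)) = μ.map f + μ.map g := by
  ext s hs
  have hunion : (fun x => max (f x) (g x)) ⁻¹' s ∪ (fun x => min (f x) (g x)) ⁻¹' s
      = f ⁻¹' s ∪ g ⁻¹' s := by
    ext x
    rcases le_total (f x) (g x) with h | h <;> simp [h, or_comm]
  have hinter : (fun x => max (f x) (g x)) ⁻¹' s ∩ (fun x => min (f x) (g x)) ⁻¹' s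
      = f ⁻¹' s ∩ g ⁻¹' s := by
    ext x
    rcases le_total (f x) (g x) with h | h <;> simp [h, and_comm]
  simp only [Measure.add_apply, Measure.map_apply (hf.max hg) hs,
    Measure.map_apply (hf.min hg) hs, Measure.map_apply hf hs, Measure.map_apply hg hs]
  rw [← measure_union_add_inter _ ((hf.min hg) hs), hunion, hinter,
    measure_union_add_inter _ (hg hs)]

lemma inv_two_smul_add_self {α : Type*} [MeasurableSpace α] (μ : Measure α) :
    (2 : ℝ≥0∞)⁻¹ • (μ + μ) = μ := by
  rw [smul_add, ← add_smul, ENNReal.inv_two_add_inv_two, one_smul]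

instance : IsProbabilityMeasure unif01 :=
  ⟨by simp [unif01]⟩

lemma integrable_unif01 {f : ℝ → ℝ} (hf : Continuous f) : Integrable f unif01 :=
  hf.integrableOn_Icc

lemma map_one_sub_unif01 : unif01.map (fun t => 1 - t) = unif01 := by
  have h := (Measure.measurePreserving_sub_left (volume : Measure ℝ) 1).restrict_preimage
    (measurableSet_Icc (a := (0 : ℝ)) (b := 1))
  rw [preimage_const_sub_Icc, sub_zero, sub_self] at h
  exact h.map_eq

lemma integral_abs_sub_half_pow_three_unif01 : ∫ t, |t - 1/2| ^ 3 ∂unif01 = 1/32 := by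
  have hcont : Continuous fun x : ℝ => |x| ^ 3 := by fun_prop
  have hhalf : ∫ x in (0 : ℝ)..1/2, |x| ^ 3 = 1/64 := by
    rw [intervalIntegral.integral_congr (g := fun x => x ^ 3) fun x hx => by
      rw [uIcc_of_le (by norm_num)] at hx
      simp [abs_of_nonneg hx.1], integral_pow]
    norm_num
  have hneg : ∫ x in -(1/2 : ℝ)..0, |x| ^ 3 = ∫ x in (0 : ℝ)..1/2, |x| ^ 3 := by
    simpa using (intervalIntegral.integral_comp_neg (a := 0) (b := 1/2) fun x : ℝ => |x| ^ 3).symm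
  rw [unif01, integral_Icc_eq_integral_Ioc, ← intervalIntegral.integral_of_le zero_le_one,
    intervalIntegral.integral_comp_sub_right (fun x => |x| ^ 3),
    ← intervalIntegral.integral_add_adjacent_intervals (b := 0)
      (hcont.intervalIntegrable _ _) (hcont.intervalIntegrable _ _)]
  norm_num [hneg, hhalf]

section LawOfUnif01

variable {Ω : Type*} [MeasurableSpace Ω] {μ : Measure Ω} {X : Ω → ℝ}

lemma integrable_abs_sub_half_pow_three_of_map_eq_unif01 (hX : Measurable X)
    (h : μ.map X = unif01) : Integrable (fun ω => |X ω - 1/2| ^ 3) μ := by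
  have hg : Continuous fun t : ℝ => |t - 1/2| ^ 3 := by fun_prop
  have hint := integrable_unif01 hg
  rwa [← h, integrable_map_measure hg.aestronglyMeasurable hX.aemeasurable] at hint

lemma integral_abs_sub_half_pow_three_of_map_eq_unif01 (hX : Measurable X)
    (h : μ.map X = unif01) : ∫ ω, |X ω - 1/2| ^ 3 ∂μ = 1/32 := by
  have hg : Continuous fun t : ℝ => |t - 1/2| ^ 3 := by fun_prop
  rw [← integral_abs_sub_half_pow_three_unif01, ← h,
    integral_map hX.aemeasurable hg.aestronglyMeasurable]

end LawOfUnif01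

theorem integral_sub_half_mul_sub_half_mul_sub_half_le {Ω : Type*} [MeasurableSpace Ω]
    {μ : Measure Ω} {U V W : Ω → ℝ} (hU : Measurable U) (hV : Measurable V) (hW : Measurable W)
    (hdU : μ.map U = unif01) (hdV : μ.map V = unif01) (hdW : μ.map W = unif01) :
    ∫ ω, (U ω - 1/2) * (V ω - 1/2) * (W ω - 1/2) ∂μ ≤ 1/32 := by
  have h := integral_mul_mul_le (hU.sub_const _).aestronglyMeasurable
    (hV.sub_const _).aestronglyMeasurable (hW.sub_const _).aestronglyMeasurable
    (integrable_abs_sub_half_pow_three_of_map_eq_unif01 hU hdU)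
    (integrable_abs_sub_half_pow_three_of_map_eq_unif01 hV hdV)
    (integrable_abs_sub_half_pow_three_of_map_eq_unif01 hW hdW)
  rw [integral_abs_sub_half_pow_three_of_map_eq_unif01 hU hdU,
    integral_abs_sub_half_pow_three_of_map_eq_unif01 hV hdV,
    integral_abs_sub_half_pow_three_of_map_eq_unif01 hW hdW] at h
  linarith

lemma sub_half_mul_sub_half_mul_max_sub_half (t : ℝ) :
    (t - 1/2) * (t - 1/2) * (max t (1 - t) - 1/2) = |t - 1/2| ^ 3 := by
  rcases le_total t (1 - t) with h | h
  · rw [max_eq_right h, abs_of_nonpos (by linarith)]; ring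
  · rw [max_eq_left h, abs_of_nonneg (by linarith)]; ring

lemma sub_half_mul_one_sub_sub_half_mul_min_sub_half (t : ℝ) :
    (t - 1/2) * (1 - t - 1/2) * (min t (1 - t) - 1/2) = |t - 1/2| ^ 3 := by
  rcases le_total t (1 - t) with h | h
  · rw [min_eq_left h, abs_of_nonpos (by linarith)]; ring
  · rw [min_eq_right h, abs_of_nonneg (by linarith)]; ring

noncomputable def extremalLaw : Measure (ℝ × ℝ × ℝ) :=
  (2 : ℝ≥0∞)⁻¹ • (unif01.map (fun t => (t, t, max t (1 - t))) +
    unif01.map (fun t => (t, 1 - t, min t (1 - t))))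

lemma map_extremalLaw {β : Type*} [MeasurableSpace β] {f : ℝ × ℝ × ℝ → β} (hf : Measurable f) :
    extremalLaw.map f = (2 : ℝ≥0∞)⁻¹ • (unif01.map (fun t => f (t, t, max t (1 - t))) +
      unif01.map (fun t => f (t, 1 - t, min t (1 - t)))) := by
  rw [extremalLaw, Measure.map_smul, Measure.map_add _ _ hf, Measure.map_map hf (by fun_prop),
    Measure.map_map hf (by fun_prop)]
  rfl

lemma extremalLaw_map_fst : extremalLaw.map (fun p => p.1) = unif01 := by
  rw [map_extremalLaw measurable_fst, Measure.map_id', inv_two_smul_add_self]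

lemma extremalLaw_map_snd_fst : extremalLaw.map (fun p => p.2.1) = unif01 := by
  rw [map_extremalLaw (by fun_prop), Measure.map_id', map_one_sub_unif01, inv_two_smul_add_self]

lemma extremalLaw_map_snd_snd : extremalLaw.map (fun p => p.2.2) = unif01 := by
  rw [map_extremalLaw (by fun_prop)]
  dsimp only
  rw [map_max_add_map_min unif01 (f := fun t => t) measurable_id' (by fun_prop), Measure.map_id',
    map_one_sub_unif01, inv_two_smul_add_self]

instance : IsProbabilityMeasure extremalLaw :=
  have : IsProbabilityMeasure (extremalLaw.map fun p => p.1) := by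
    rw [extremalLaw_map_fst]; infer_instance
  Measure.isProbabilityMeasure_of_map fun p => p.1

lemma integral_extremalLaw :
    ∫ p, (p.1 - 1/2) * (p.2.1 - 1/2) * (p.2.2 - 1/2) ∂extremalLaw = 1/32 := by
  set F : ℝ × ℝ × ℝ → ℝ := fun p => (p.1 - 1/2) * (p.2.1 - 1/2) * (p.2.2 - 1/2)
  have hF : Continuous F := by fun_prop
  have hcube : Continuous fun t : ℝ => |t - 1/2| ^ 3 := by fun_prop
  have key {f : ℝ → ℝ × ℝ × ℝ} (hf : Continuous f) (hFf : ∀ t, F (f t) = |t - 1/2| ^ 3) :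
      Integrable F (unif01.map f) ∧ ∫ p, F p ∂(unif01.map f) = 1/32 := by
    simp only [integrable_map_measure hF.aestronglyMeasurable hf.aemeasurable,
      integral_map hf.aemeasurable hF.aestronglyMeasurable, Function.comp_def, hFf]
    exact ⟨integrable_unif01 hcube, integral_abs_sub_half_pow_three_unif01⟩
  obtain ⟨hint₁, hval₁⟩ := key (f := fun t => (t, t, max t (1 - t))) (by fun_prop)
    sub_half_mul_sub_half_mul_max_sub_half
  obtain ⟨hint₂, hval₂⟩ := key (f := fun t => (t, 1 - t, min t (1 - t))) (by fun_prop)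
    sub_half_mul_one_sub_sub_half_mul_min_sub_half
  rw [extremalLaw, integral_smul_measure, integral_add_measure hint₁ hint₂, hval₁, hval₂]
  norm_num

theorem stmt_19_general {Ω : Type*} [MeasurableSpace Ω] (μ : Measure Ω)
    (U V W : Ω → ℝ) (hU : Measurable U) (hV : Measurable V) (hW : Measurable W)
    (hdU : μ.map U = unif01) (hdV : μ.map V = unif01) (hdW : μ.map W = unif01) :
    (∫ ω, (U ω - 1/2) * (V ω - 1/2) * (W ω - 1/2) ∂μ ≤ 1/32) ∧
    (∃ P : Measure (ℝ × ℝ × ℝ), IsProbabilityMeasure P ∧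
        P.map (fun p => p.1) = unif01 ∧ P.map (fun p => p.2.1) = unif01 ∧
        P.map (fun p => p.2.2) = unif01 ∧
        ∫ p, (p.1 - 1/2) * (p.2.1 - 1/2) * (p.2.2 - 1/2) ∂P = 1/32) ∧
    ((2 * Real.sqrt 3) ^ 3 * ∫ ω, (U ω - 1/2) * (V ω - 1/2) * (W ω - 1/2) ∂μ
        ≤ 3 * Real.sqrt 3 / 4) := by
  have hle := integral_sub_half_mul_sub_half_mul_sub_half_le hU hV hW hdU hdV hdW
  refine ⟨hle, ⟨extremalLaw, inferInstance, extremalLaw_map_fst, extremalLaw_map_snd_fst,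
    extremalLaw_map_snd_snd, integral_extremalLaw⟩, ?_⟩
  have hcube : (2 * Real.sqrt 3) ^ 3 = 24 * Real.sqrt 3 := by
    rw [show (2 * Real.sqrt 3) ^ 3 = 8 * (Real.sqrt 3 ^ 2 * Real.sqrt 3) by ring,
      Real.sq_sqrt zero_le_three]
    ring
  calc (2 * Real.sqrt 3) ^ 3 * ∫ ω, (U ω - 1/2) * (V ω - 1/2) * (W ω - 1/2) ∂μ
      ≤ (2 * Real.sqrt 3) ^ 3 * (1/32) := by gcongr
    _ = 3 * Real.sqrt 3 / 4 := by rw [hcube]; ring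

/-- For `U, V, W` uniform on `[0,1]` with arbitrary dependence,
`E((U−1/2)(V−1/2)(W−1/2)) ≤ 1/32`, the bound is attained, and consequently the maximum
coskewness of three `Uniform[0,1]` variables (obtained by standardizing, i.e., multiplying
by `(2√3)³ = (√12)³`) is `3√3/4`. -/
theorem stmt_19 {Ω : Type*} [MeasurableSpace Ω] (μ : Measure Ω) [IsProbabilityMeasure μ]
    (U V W : Ω → ℝ) (hU : Measurable U) (hV : Measurable V) (hW : Measurable W)
    (hdU : μ.map U = unif01) (hdV : μ.map V = unif01) (hdW : μ.map W = unif01) :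
    (∫ ω, (U ω - 1/2) * (V ω - 1/2) * (W ω - 1/2) ∂μ ≤ 1/32) ∧
    (∃ P : Measure (ℝ × ℝ × ℝ), IsProbabilityMeasure P ∧
        P.map (fun p => p.1) = unif01 ∧ P.map (fun p => p.2.1) = unif01 ∧
        P.map (fun p => p.2.2) = unif01 ∧
        ∫ p, (p.1 - 1/2) * (p.2.1 - 1/2) * (p.2.2 - 1/2) ∂P = 1/32) ∧
    ((2 * Real.sqrt 3) ^ 3 * ∫ ω, (U ω - 1/2) * (V ω - 1/2) * (W ω - 1/2) ∂μ
        ≤ 3 * Real.sqrt 3 / 4) :=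
  stmt_19_general μ U V W hU hV hW hdU hdV hdW
end
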